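/- Let d ≥ 2 and let F ∈ S^{d×n(d)} be the matrix defined below, where n(d) = d(d+1)/2 + 2 if d ≡ 0 mod 2, n(d) = d(d+1)/2 + 1 if d ≡ 1 mod 4, and n(d) = d(d+1)/2 + 3 if d ≡ 3 mod 4. Then in F_2[x_1,…,x_d]: (i) Σ_{j=1}^{n(d)} (α_j^F + β_j^F) = 0 (the degree-1 part of w(F) vanishes); (ii) the characteristic ideal I_F equals J; and (iii) w(F) − (1 + x_1²) ∈ J while x_1² ∉ J. (These are the algebraic expressions of orientability, of the characteristic ideal, and of the nonvanishing of the second Stiefel–Whitney class of the flat manifold defined by F, all of whose higher Stiefel–Whitney classes vanish.) -/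

import Mathlib

open MvPolynomial

abbrev S4 : Type := ZMod 2 × ZMod 2

def Sα (s : S4) : ZMod 2 := s.1
def Sβ (s : S4) : ZMod 2 := s.2

def s0 : S4 := (0, 0)
def s1 : S4 := (1, 1)
def s2 : S4 := (1, 0)
def s3 : S4 := (0, 1)

/-- The linear form `α_j^A = Σ_i α(A_{ij}) x_i`. -/
noncomputable def alphaP {d : ℕ} {ι : Type*} (A : Matrix (Fin d) ι S4) (j : ι) :
    MvPolynomial (Fin d) (ZMod 2) := ∑ i, C (Sα (A i j)) * X i

/-- The linear form `β_j^A = Σ_i β(A_{ij}) x_i`. -/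
noncomputable def betaP {d : ℕ} {ι : Type*} (A : Matrix (Fin d) ι S4) (j : ι) :
    MvPolynomial (Fin d) (ZMod 2) := ∑ i, C (Sβ (A i j)) * X i

/-- `θ_j^A = α_j^A · β_j^A`. -/
noncomputable def thetaP {d : ℕ} {ι : Type*} (A : Matrix (Fin d) ι S4) (j : ι) :
    MvPolynomial (Fin d) (ZMod 2) := alphaP A j * betaP A j

/-- The characteristic ideal `I_A = ⟨θ_1^A, …, θ_n^A⟩`. -/
noncomputable def charIdeal {d : ℕ} {ι : Type*} (A : Matrix (Fin d) ι S4) :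
    Ideal (MvPolynomial (Fin d) (ZMod 2)) := Ideal.span (Set.range (thetaP A))

/-- The Stiefel–Whitney polynomial `w(A) = Π_j (1 + α_j^A + β_j^A)`. -/
noncomputable def swPoly {d : ℕ} {ι : Type*} [Fintype ι] (A : Matrix (Fin d) ι S4) :
    MvPolynomial (Fin d) (ZMod 2) := ∏ j, (1 + alphaP A j + betaP A j)

/-- The ideal `J = ⟨{x_i² + x_j² : i ≠ j} ∪ {x_i x_j : i ≠ j}⟩`. -/
noncomputable def Jideal (d : ℕ) : Ideal (MvPolynomial (Fin d) (ZMod 2)) :=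
  Ideal.span ({q | ∃ i j : Fin d, i ≠ j ∧ q = X i ^ 2 + X j ^ 2} ∪
              {q | ∃ i j : Fin d, i ≠ j ∧ q = X i * X j})

/-- `A₀ ∈ S^{d×(d-1)}`: the `l`-th column has entry `1` in rows `l` and `d`, `0` elsewhere. -/
def matA0 (d : ℕ) : Matrix (Fin d) (Fin (d - 1)) S4 :=
  fun i l => if i.val = l.val ∨ i.val = d - 1 then s1 else s0

/-- Index set for the columns of `A₁`: pairs `1 ≤ i < j ≤ d`. -/
abbrev PairIdx (d : ℕ) : Type := {p : Fin d × Fin d // p.1 < p.2}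

/-- `A₁ ∈ S^{d×(d(d-1)/2)}`: the column indexed by `i < j` has entry `2` in row `i`,
entry `3` in row `j` and `0` elsewhere. -/
def matA1 (d : ℕ) : Matrix (Fin d) (PairIdx d) S4 :=
  fun i p => if i = p.1.1 then s2 else if i = p.1.2 then s3 else s0

/-- `A = [A₀, A₁]`. -/
def matA (d : ℕ) : Matrix (Fin d) (Fin (d - 1) ⊕ PairIdx d) S4 :=
  Matrix.fromCols (matA0 d) (matA1 d)

/-- `B ∈ S^{d×1}`: all entries `2`. -/
def matB (d : ℕ) : Matrix (Fin d) (Fin 1) S4 := fun _ _ => s2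

/-- `C ∈ S^{d×1}`: entry `2` in row `1`, `0` elsewhere. -/
def matC (d : ℕ) : Matrix (Fin d) (Fin 1) S4 := fun i _ => if i.val = 0 then s2 else s0

/-- `E = [A,B,C,C]` (the case `d ≡ 0 mod 2`). -/
def matE0 (d : ℕ) := Matrix.fromCols (matA d)
  (Matrix.fromCols (matB d) (Matrix.fromCols (matC d) (matC d)))

/-- `E = [A,B,B]` (the case `d ≡ 1 mod 4`). -/
def matE1 (d : ℕ) := Matrix.fromCols (matA d) (Matrix.fromCols (matB d) (matB d))

/-- `F = [E,C,C,C,C] = [A,C,C,C,C]` (the case `d ≡ 3 mod 4`; there `E = A`). -/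
def matF3 (d : ℕ) := Matrix.fromCols (matA d)
  (Matrix.fromCols (matC d)
    (Matrix.fromCols (matC d) (Matrix.fromCols (matC d) (matC d))))

/-! Over `F₂`, the columns of `A₀` have `α = β = x_l + x_d`, those of `A₁` have `α = x_i`,
`β = x_j` (`i < j`), and those of `B` and `C` have `β = 0`. Hence `I_F = I_A` is generated by the
`x_l² + x_d²` and the `x_i x_j`, which is `J`.

In `R = F₂[x]/J` the images `y_i` of the variables satisfy `y_i y_j = 0` for `i ≠ j`,
`y_i² = t := y_1²` and `t² = 0`. So `1 + y_i + y_j = (1 + y_i)(1 + y_j)`, the product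
`U = ∏ (1 + y_i)` equals `1 + Σ y_i` with `U² = s^d` for `s = 1 + t`, and `s² = 1`. Then `w(F)`
is `U^(d-1)` times the contribution of `B` and `C`, and reducing the exponents modulo 4 gives
`s` in each of the three cases. Finally `x_1² ∉ J` because the sum of the coefficients of the
monomials `x_k²` vanishes on `J`. -/

open Finset

@[to_additive]
lemma prod_pairIdx {M : Type*} [CommMonoid M] {d : ℕ} (f : Fin d → M) :
    ∏ p : PairIdx d, f p.1.1 * f p.1.2 = ∏ i, f i ^ (d - 1) := by
  rw [← Finset.prod_subtype (univ.filter fun p : Fin d × Fin d => p.1 < p.2) (by simp)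
      (fun p => f p.1 * f p.2)]
  rw [prod_mul_distrib, prod_filter, prod_filter, Fintype.prod_prod_type,
    Fintype.prod_prod_type, Finset.prod_comm (f := fun x y => if x < y then f y else 1),
    ← prod_mul_distrib]
  refine prod_congr rfl fun i _ => ?_
  simp only [prod_ite, prod_const_one, mul_one, prod_const, ← pow_add]
  congr 1
  rw [← card_union_of_disjoint (disjoint_filter.2 fun j _ h h' => lt_asymm h h')]
  convert card_erase_of_mem (mem_univ i) using 2
  · ext j; simp [lt_or_lt_iff_ne, eq_comm]
  · simp

lemma Finset.prod_one_add_of_pairwise_mul_eq_zero {ι R : Type*} [CommSemiring R] {f : ι → R}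
    (s : Finset ι) (hf : (s : Set ι).Pairwise fun i j => f i * f j = 0) :
    ∏ i ∈ s, (1 + f i) = 1 + ∑ i ∈ s, f i := by
  induction s using Finset.cons_induction with
  | empty => simp
  | cons a s ha ih =>
    rw [coe_cons, Set.pairwise_insert] at hf
    have hcross : f a * ∑ i ∈ s, f i = 0 :=
      mul_sum s f (f a) ▸ sum_eq_zero fun i hi => (hf.2 i hi (ne_of_mem_of_not_mem hi ha).symm).1
    rw [prod_cons, sum_cons, ih hf.1, one_add_mul, mul_one_add, hcross, add_zero, add_assoc,
      add_comm (f a)]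

section Monoid

variable {M : Type*} [Monoid M] {a b : M} {n : ℕ}

lemma pow_eq_one_of_sq_eq_one (ha : a ^ 2 = 1) (hn : Even n) : a ^ n = 1 := by
  obtain ⟨k, rfl⟩ := hn.two_dvd
  rw [pow_mul, ha, one_pow]

lemma pow_eq_self_of_sq_eq_one (ha : a ^ 2 = 1) (hn : Odd n) : a ^ n = a := by
  obtain ⟨k, rfl⟩ := hn
  rw [pow_succ, pow_mul, ha, one_pow, one_mul]

lemma pow_eq_of_sq_eq_of_sq_eq_one (hab : a ^ 2 = b) (hb : b ^ 2 = 1) (hn : n % 4 = 2) :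
    a ^ n = b := by
  obtain ⟨k, rfl⟩ : ∃ k, n = 2 * (2 * k + 1) := ⟨n / 4, by omega⟩
  rw [pow_mul, hab, pow_eq_self_of_sq_eq_one hb (odd_two_mul_add_one k)]

end Monoid

section Columns

variable {d : ℕ} {ι κ : Type*}

lemma alphaP_fromCols (M : Matrix (Fin d) ι S4) (N : Matrix (Fin d) κ S4) :
    alphaP (Matrix.fromCols M N) = Sum.elim (alphaP M) (alphaP N) := by
  ext (j | j) : 1 <;> rfl

lemma betaP_fromCols (M : Matrix (Fin d) ι S4) (N : Matrix (Fin d) κ S4) :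
    betaP (Matrix.fromCols M N) = Sum.elim (betaP M) (betaP N) := by
  ext (j | j) : 1 <;> rfl

lemma thetaP_fromCols (M : Matrix (Fin d) ι S4) (N : Matrix (Fin d) κ S4) :
    thetaP (Matrix.fromCols M N) = Sum.elim (thetaP M) (thetaP N) := by
  ext (j | j) : 1 <;> rfl

lemma charIdeal_fromCols (M : Matrix (Fin d) ι S4) (N : Matrix (Fin d) κ S4) :
    charIdeal (Matrix.fromCols M N) = charIdeal M ⊔ charIdeal N := by
  rw [charIdeal, thetaP_fromCols, Set.Sum.elim_range, Ideal.span_union]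
  rfl

lemma swPoly_fromCols [Fintype ι] [Fintype κ] (M : Matrix (Fin d) ι S4)
    (N : Matrix (Fin d) κ S4) :
    swPoly (Matrix.fromCols M N) = swPoly M * swPoly N := by
  simp only [swPoly, alphaP_fromCols, betaP_fromCols, Fintype.prod_sum_type, Sum.elim_inl,
    Sum.elim_inr]

end Columns

section Blocks

variable {d : ℕ}

lemma sum_C_single_mul_X (a : Fin d) :
    ∑ i, C ((Pi.single a 1 : Fin d → ZMod 2) i) * X i =
      (X a : MvPolynomial (Fin d) (ZMod 2)) := by
  simp [Pi.single_apply]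

lemma alphaP_matA0 (l : Fin (d - 1)) :
    alphaP (matA0 d) l = X (Fin.castLE (Nat.sub_le d 1) l) +
      X ⟨d - 1, Nat.sub_one_lt_of_lt (l.2.trans_le (Nat.sub_le d 1))⟩ := by
  rw [alphaP, ← sum_C_single_mul_X, ← sum_C_single_mul_X, ← sum_add_distrib]
  refine sum_congr rfl fun i _ => ?_
  rw [← add_mul, ← map_add]
  simp only [matA0, Pi.single_apply, ← Fin.val_inj, Fin.val_castLE]
  split_ifs <;> first | rfl | omega

lemma betaP_matA0 : betaP (matA0 d) = alphaP (matA0 d) := by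
  ext l : 1
  refine sum_congr rfl fun i _ => ?_
  simp only [matA0]
  split_ifs <;> rfl

lemma alphaP_matA1 (p : PairIdx d) : alphaP (matA1 d) p = X p.1.1 := by
  rw [alphaP, ← sum_C_single_mul_X]
  refine sum_congr rfl fun i _ => ?_
  simp only [matA1, Pi.single_apply]
  split_ifs <;> rfl

lemma betaP_matA1 (p : PairIdx d) : betaP (matA1 d) p = X p.1.2 := by
  rw [betaP, ← sum_C_single_mul_X]
  refine sum_congr rfl fun i _ => ?_
  simp only [matA1, Pi.single_apply]
  split_ifs with h₁ h₂ <;> first | rfl | exact absurd (h₁.symm.trans h₂) p.2.ne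

lemma alphaP_matB (j : Fin 1) : alphaP (matB d) j = ∑ i, X i := by
  simp [alphaP, matB, Sα, s2]

lemma betaP_matB (j : Fin 1) : betaP (matB d) j = 0 := by
  simp [betaP, matB, Sβ, s2]

lemma alphaP_matC (hd : 0 < d) (j : Fin 1) : alphaP (matC d) j = X ⟨0, hd⟩ := by
  rw [alphaP, ← sum_C_single_mul_X]
  refine sum_congr rfl fun i _ => ?_
  simp only [matC, Pi.single_apply, ← Fin.val_inj]
  split_ifs <;> rfl

lemma betaP_matC (j : Fin 1) : betaP (matC d) j = 0 := by
  simp [betaP, matC, Sβ, s2, s0, apply_ite Prod.snd]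

lemma swPoly_matA0 : swPoly (matA0 d) = 1 :=
  prod_eq_one fun l _ => by rw [betaP_matA0, add_assoc, CharTwo.add_self_eq_zero, add_zero]

lemma swPoly_matC (hd : 0 < d) : swPoly (matC d) = 1 + X ⟨0, hd⟩ := by
  rw [swPoly, Fin.prod_univ_one, alphaP_matC hd, betaP_matC, add_zero]

end Blocks

section Jideal

variable {d : ℕ}

lemma X_mul_X_mem_Jideal {i j : Fin d} (h : i ≠ j) :
    (X i * X j : MvPolynomial (Fin d) (ZMod 2)) ∈ Jideal d :=
  Ideal.subset_span (Or.inr ⟨i, j, h, rfl⟩)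

lemma X_sq_add_X_sq_mem_Jideal (i j : Fin d) :
    (X i ^ 2 + X j ^ 2 : MvPolynomial (Fin d) (ZMod 2)) ∈ Jideal d := by
  rcases eq_or_ne i j with rfl | h
  · rw [CharTwo.add_self_eq_zero]
    exact zero_mem _
  · exact Ideal.subset_span (Or.inl ⟨i, j, h, rfl⟩)

lemma X_pow_four_mem_Jideal (hd : 2 ≤ d) (i : Fin d) :
    (X i ^ 4 : MvPolynomial (Fin d) (ZMod 2)) ∈ Jideal d := by
  have : Nontrivial (Fin d) := Fin.nontrivial_iff_two_le.2 hd
  obtain ⟨j, hj⟩ := exists_ne i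
  have key : (X i ^ 4 : MvPolynomial (Fin d) (ZMod 2)) =
      X i ^ 2 * (X i ^ 2 + X j ^ 2) + (X i * X j) * (X i * X j) := by
    linear_combination (-(X i ^ 2 * X j ^ 2) : MvPolynomial (Fin d) (ZMod 2)) *
      CharTwo.two_eq_zero (R := MvPolynomial (Fin d) (ZMod 2))
  rw [key]
  exact add_mem (Ideal.mul_mem_left _ _ (X_sq_add_X_sq_mem_Jideal i j))
    (Ideal.mul_mem_left _ _ (X_mul_X_mem_Jideal hj.symm))

end Jideal

noncomputable def sw1Poly {d : ℕ} {ι : Type*} [Fintype ι] (A : Matrix (Fin d) ι S4) :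
    MvPolynomial (Fin d) (ZMod 2) :=
  ∑ j, (alphaP A j + betaP A j)

section FirstClass

variable {d : ℕ}

lemma sw1Poly_fromCols {ι κ : Type*} [Fintype ι] [Fintype κ] (M : Matrix (Fin d) ι S4)
    (N : Matrix (Fin d) κ S4) :
    sw1Poly (Matrix.fromCols M N) = sw1Poly M + sw1Poly N := by
  simp only [sw1Poly, alphaP_fromCols, betaP_fromCols, Fintype.sum_sum_type, Sum.elim_inl,
    Sum.elim_inr]

lemma sw1Poly_matA : sw1Poly (matA d) = (d - 1) • ∑ i, X i := by
  have hA0 : sw1Poly (matA0 d) = 0 := by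
    simp only [sw1Poly, betaP_matA0, CharTwo.add_self_eq_zero, sum_const_zero]
  have hA1 : sw1Poly (matA1 d) = ∑ i, (d - 1) • X i := by
    simp only [sw1Poly, alphaP_matA1, betaP_matA1]
    exact sum_pairIdx X
  rw [matA, sw1Poly_fromCols, hA0, hA1, zero_add, smul_sum]

lemma sw1Poly_matB : sw1Poly (matB d) = ∑ i, X i := by
  rw [sw1Poly, Fin.sum_univ_one, alphaP_matB, betaP_matB, add_zero]

lemma sw1Poly_matC (hd : 0 < d) : sw1Poly (matC d) = X ⟨0, hd⟩ := by
  rw [sw1Poly, Fin.sum_univ_one, alphaP_matC hd, betaP_matC, add_zero]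

lemma sw1Poly_matE0 (hd : 0 < d) (h : d % 2 = 0) : sw1Poly (matE0 d) = 0 := by
  rw [matE0, sw1Poly_fromCols, sw1Poly_fromCols, sw1Poly_fromCols, sw1Poly_matA, sw1Poly_matB,
    sw1Poly_matC hd, CharTwo.add_self_eq_zero, add_zero, ← succ_nsmul, Nat.sub_add_cancel hd,
    nsmul_eq_mul, CharTwo.natCast_eq_ite, if_pos (Nat.even_iff.2 h), zero_mul]

lemma sw1Poly_matE1 (h : d % 4 = 1) : sw1Poly (matE1 d) = 0 := by
  rw [matE1, sw1Poly_fromCols, sw1Poly_fromCols, sw1Poly_matA, sw1Poly_matB,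
    CharTwo.add_self_eq_zero, add_zero, nsmul_eq_mul, CharTwo.natCast_eq_ite,
    if_pos (Nat.even_iff.2 (by omega)), zero_mul]

lemma sw1Poly_matF3 (hd : 0 < d) (h : d % 4 = 3) : sw1Poly (matF3 d) = 0 := by
  simp only [matF3, sw1Poly_fromCols, sw1Poly_matA, sw1Poly_matC hd, CharTwo.add_self_eq_zero,
    add_zero, nsmul_eq_mul, CharTwo.natCast_eq_ite,
    if_pos (Nat.even_iff.2 (by omega : (d - 1) % 2 = 0)), zero_mul]

end FirstClass

section NonMembership

variable {d : ℕ}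

lemma coeff_single_two_mul_X_mul_X (f : MvPolynomial (Fin d) (ZMod 2)) {i j : Fin d} (h : i ≠ j)
    (k : Fin d) : coeff (Finsupp.single k 2) (f * (X i * X j)) = 0 := by
  rw [X, X, monomial_mul, one_mul, coeff_mul_monomial', if_neg]
  intro hle
  have hi := hle i
  have hj := hle j
  simp only [Finsupp.add_apply, Finsupp.single_apply] at hi hj
  split_ifs at hi hj <;> simp_all

lemma coeff_single_two_mul_X_sq (f : MvPolynomial (Fin d) (ZMod 2)) (i k : Fin d) :
    coeff (Finsupp.single k 2) (f * X i ^ 2) = if i = k then coeff 0 f else 0 := by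
  rw [X_pow_eq_monomial, coeff_mul_monomial', mul_one]
  rcases eq_or_ne i k with rfl | h
  · simp
  · rw [if_neg, if_neg h]
    intro hle
    simpa [h] using hle i

noncomputable def squareCoeffSum (d : ℕ) : MvPolynomial (Fin d) (ZMod 2) →ₗ[ZMod 2] ZMod 2 :=
  ∑ k, lcoeff (ZMod 2) (Finsupp.single k 2)

lemma squareCoeffSum_mul_X_sq (f : MvPolynomial (Fin d) (ZMod 2)) (i : Fin d) :
    squareCoeffSum d (f * X i ^ 2) = coeff 0 f := by
  simp [squareCoeffSum, coeff_single_two_mul_X_sq]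

lemma squareCoeffSum_mul_eq_zero_of_mem_Jideal {p : MvPolynomial (Fin d) (ZMod 2)}
    (hp : p ∈ Jideal d) (f : MvPolynomial (Fin d) (ZMod 2)) : squareCoeffSum d (f * p) = 0 := by
  induction hp using Submodule.span_induction generalizing f with
  | mem q hq =>
    rcases hq with ⟨i, j, -, rfl⟩ | ⟨i, j, h, rfl⟩
    · rw [mul_add, map_add, squareCoeffSum_mul_X_sq, squareCoeffSum_mul_X_sq,
        CharTwo.add_self_eq_zero]
    · simp [squareCoeffSum, coeff_single_two_mul_X_mul_X f h]
  | zero => rw [mul_zero, map_zero]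
  | add p q _ _ hp hq => rw [mul_add, map_add, hp, hq, add_zero]
  | smul a q _ hq => rw [smul_eq_mul, ← mul_assoc, hq]

lemma X_sq_not_mem_Jideal (i : Fin d) : X i ^ 2 ∉ Jideal d := fun h => by
  have h₁ := squareCoeffSum_mul_eq_zero_of_mem_Jideal h 1
  rw [squareCoeffSum_mul_X_sq, coeff_zero_one] at h₁
  exact one_ne_zero h₁

end NonMembership

section CharIdeal

variable {d : ℕ}

lemma charIdeal_eq_bot {ι : Type*} {N : Matrix (Fin d) ι S4} (h : ∀ j, betaP N j = 0) :
    charIdeal N = ⊥ :=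
  Ideal.span_eq_bot.2 <| by
    rintro _ ⟨j, rfl⟩
    rw [thetaP, h, mul_zero]

lemma thetaP_matA0 (l : Fin (d - 1)) :
    thetaP (matA0 d) l = X (Fin.castLE (Nat.sub_le d 1) l) ^ 2 +
      X ⟨d - 1, Nat.sub_one_lt_of_lt (l.2.trans_le (Nat.sub_le d 1))⟩ ^ 2 := by
  rw [thetaP, betaP_matA0, ← sq, alphaP_matA0, CharTwo.add_sq]

lemma thetaP_matA1 (p : PairIdx d) : thetaP (matA1 d) p = X p.1.1 * X p.1.2 := by
  rw [thetaP, alphaP_matA1, betaP_matA1]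

lemma charIdeal_matA_le : charIdeal (matA d) ≤ Jideal d := by
  rw [matA, charIdeal_fromCols, sup_le_iff, charIdeal, charIdeal, Ideal.span_le, Ideal.span_le]
  constructor
  · rintro _ ⟨l, rfl⟩
    rw [thetaP_matA0]
    exact X_sq_add_X_sq_mem_Jideal _ _
  · rintro _ ⟨p, rfl⟩
    rw [thetaP_matA1]
    exact X_mul_X_mem_Jideal p.2.ne

lemma X_sq_add_X_last_sq_mem_charIdeal_matA0 (i : Fin d) :
    (X i ^ 2 + X ⟨d - 1, Nat.sub_one_lt_of_lt i.2⟩ ^ 2 : MvPolynomial (Fin d) (ZMod 2)) ∈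
      charIdeal (matA0 d) := by
  have hid := i.2
  by_cases hi : i.val = d - 1
  · rw [show i = ⟨d - 1, by omega⟩ from Fin.ext hi, CharTwo.add_self_eq_zero]
    exact zero_mem _
  · have h := Ideal.subset_span (α := MvPolynomial (Fin d) (ZMod 2))
      (Set.mem_range_self (f := thetaP (matA0 d)) ⟨i, by omega⟩)
    rwa [thetaP_matA0] at h

lemma Jideal_le_charIdeal_matA : Jideal d ≤ charIdeal (matA d) := by
  rw [Jideal, Ideal.span_le]
  rintro _ (⟨i, j, -, rfl⟩ | ⟨i, j, h, rfl⟩)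
  · have hsum : (X i ^ 2 + X j ^ 2 : MvPolynomial (Fin d) (ZMod 2)) =
        (X i ^ 2 + X ⟨d - 1, Nat.sub_one_lt_of_lt i.2⟩ ^ 2) +
          (X j ^ 2 + X ⟨d - 1, Nat.sub_one_lt_of_lt i.2⟩ ^ 2) := by
      rw [add_add_add_comm, CharTwo.add_self_eq_zero, add_zero]
    rw [hsum, matA, charIdeal_fromCols]
    exact Ideal.mem_sup_left (add_mem (X_sq_add_X_last_sq_mem_charIdeal_matA0 i)
      (X_sq_add_X_last_sq_mem_charIdeal_matA0 j))
  · rw [matA, charIdeal_fromCols]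
    refine Ideal.mem_sup_right ?_
    rcases h.lt_or_gt with h | h
    · rw [← thetaP_matA1 ⟨(i, j), h⟩]
      exact Ideal.subset_span ⟨_, rfl⟩
    · rw [mul_comm, ← thetaP_matA1 ⟨(j, i), h⟩]
      exact Ideal.subset_span ⟨_, rfl⟩

lemma charIdeal_matA : charIdeal (matA d) = Jideal d :=
  le_antisymm charIdeal_matA_le Jideal_le_charIdeal_matA

lemma charIdeal_matB : charIdeal (matB d) = ⊥ := charIdeal_eq_bot betaP_matB

lemma charIdeal_matC : charIdeal (matC d) = ⊥ := charIdeal_eq_bot betaP_matC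

lemma charIdeal_matE0 : charIdeal (matE0 d) = Jideal d := by
  simp only [matE0, charIdeal_fromCols, charIdeal_matA, charIdeal_matB, charIdeal_matC,
    sup_bot_eq]

lemma charIdeal_matE1 : charIdeal (matE1 d) = Jideal d := by
  simp only [matE1, charIdeal_fromCols, charIdeal_matA, charIdeal_matB, sup_bot_eq]

lemma charIdeal_matF3 : charIdeal (matF3 d) = Jideal d := by
  simp only [matF3, charIdeal_fromCols, charIdeal_matA, charIdeal_matC, sup_bot_eq]

end CharIdeal

section Quotient

variable {d : ℕ}

local notation "π" => Ideal.Quotient.mk (Jideal d)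

lemma mk_X_mul_mk_X {i j : Fin d} (h : i ≠ j) : π (X i) * π (X j) = 0 := by
  rw [← map_mul, Ideal.Quotient.eq_zero_iff_mem]
  exact X_mul_X_mem_Jideal h

lemma mk_one_add_X_sq (i k : Fin d) : π (1 + X i) ^ 2 = π (1 + X k ^ 2) := by
  rw [← map_pow, CharTwo.add_sq, one_pow, Ideal.Quotient.eq, add_sub_add_left_eq_sub,
    CharTwo.sub_eq_add]
  exact X_sq_add_X_sq_mem_Jideal i k

lemma mk_one_add_X_sq_sq (hd : 2 ≤ d) (k : Fin d) : π (1 + X k ^ 2) ^ 2 = 1 := by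
  rw [← map_pow, CharTwo.add_sq, one_pow, ← pow_mul, map_add, map_one,
    Ideal.Quotient.eq_zero_iff_mem.2 (X_pow_four_mem_Jideal hd k), add_zero]

lemma prod_mk_one_add_X : ∏ i, π (1 + X i) = π (1 + ∑ i, X i) := by
  simp only [map_add, map_one, map_sum]
  exact prod_one_add_of_pairwise_mul_eq_zero _ fun i _ j _ h => mk_X_mul_mk_X h

lemma prod_mk_one_add_X_sq (k : Fin d) : (∏ i, π (1 + X i)) ^ 2 = π (1 + X k ^ 2) ^ d := by
  rw [← prod_pow, prod_congr rfl fun i _ => mk_one_add_X_sq i k, prod_const, card_univ,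
    Fintype.card_fin]

lemma mk_swPoly_matA : π (swPoly (matA d)) = (∏ i, π (1 + X i)) ^ (d - 1) := by
  rw [matA, swPoly_fromCols, swPoly_matA0, one_mul, swPoly, map_prod, ← prod_pow,
    ← prod_pairIdx]
  refine prod_congr rfl fun p _ => ?_
  rw [alphaP_matA1, betaP_matA1, ← map_mul, Ideal.Quotient.eq]
  convert neg_mem (X_mul_X_mem_Jideal p.2.ne) using 1
  ring

lemma mk_swPoly_matB : π (swPoly (matB d)) = ∏ i, π (1 + X i) := by
  rw [prod_mk_one_add_X, swPoly, Fin.prod_univ_one, alphaP_matB, betaP_matB, add_zero]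

lemma mk_swPoly_matE0 (hd : 2 ≤ d) (h : d % 2 = 0) :
    π (swPoly (matE0 d)) = π (1 + X ⟨0, by omega⟩ ^ 2) := by
  have hU : (∏ i, π (1 + X i)) ^ 2 = 1 := by
    rw [prod_mk_one_add_X_sq ⟨0, by omega⟩,
      pow_eq_one_of_sq_eq_one (mk_one_add_X_sq_sq hd _) (Nat.even_iff.2 h)]
  rw [matE0, swPoly_fromCols, swPoly_fromCols, swPoly_fromCols, map_mul, map_mul, map_mul,
    mk_swPoly_matA, mk_swPoly_matB, swPoly_matC (by omega), ← sq,
    mk_one_add_X_sq _ ⟨0, by omega⟩, ← mul_assoc, ← pow_succ, Nat.sub_add_cancel (by omega),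
    pow_eq_one_of_sq_eq_one hU (Nat.even_iff.2 h), one_mul]

lemma mk_swPoly_matE1 (hd : 2 ≤ d) (h : d % 4 = 1) :
    π (swPoly (matE1 d)) = π (1 + X ⟨0, by omega⟩ ^ 2) := by
  have hs := mk_one_add_X_sq_sq hd ⟨0, by omega⟩
  have hU : (∏ i, π (1 + X i)) ^ 2 = π (1 + X ⟨0, by omega⟩ ^ 2) := by
    rw [prod_mk_one_add_X_sq ⟨0, by omega⟩,
      pow_eq_self_of_sq_eq_one hs (Nat.odd_iff.2 (by omega))]
  rw [matE1, swPoly_fromCols, swPoly_fromCols, map_mul, map_mul, mk_swPoly_matA, mk_swPoly_matB,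
    ← sq, ← pow_add, pow_eq_of_sq_eq_of_sq_eq_one hU hs (by omega)]

lemma mk_swPoly_matF3 (hd : 2 ≤ d) (h : d % 4 = 3) :
    π (swPoly (matF3 d)) = π (1 + X ⟨0, by omega⟩ ^ 2) := by
  have hs := mk_one_add_X_sq_sq hd ⟨0, by omega⟩
  have hU : (∏ i, π (1 + X i)) ^ 2 = π (1 + X ⟨0, by omega⟩ ^ 2) := by
    rw [prod_mk_one_add_X_sq ⟨0, by omega⟩,
      pow_eq_self_of_sq_eq_one hs (Nat.odd_iff.2 (by omega))]
  have hC : π (swPoly (matC d)) ^ 2 = π (1 + X ⟨0, by omega⟩ ^ 2) := by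
    rw [swPoly_matC (by omega), mk_one_add_X_sq]
  rw [matF3, swPoly_fromCols, swPoly_fromCols, swPoly_fromCols, swPoly_fromCols, map_mul,
    map_mul, map_mul, map_mul, mk_swPoly_matA, ← sq, ← pow_succ', ← pow_succ',
    show 2 + 1 + 1 = 2 * 2 from rfl, pow_mul, hC, hs, mul_one,
    pow_eq_of_sq_eq_of_sq_eq_one hU hs (by omega)]

end Quotient

/-- for `d ≥ 2` and the matrix `F` (per residue of `d`: `F = [A,B,C,C]` if
`d ≡ 0 mod 2`, `F = [A,B,B]` if `d ≡ 1 mod 4`, `F = [A,C,C,C,C]` if `d ≡ 3 mod 4`):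
(i) `Σ_j (α_j^F + β_j^F) = 0`; (ii) `I_F = J`; (iii) `w(F) - (1 + x₁²) ∈ J`,
while `x₁² ∉ J`. -/
theorem matF_sw_properties (d : ℕ) (hd : 2 ≤ d) :
    (d % 2 = 0 →
      (∑ j, (alphaP (matE0 d) j + betaP (matE0 d) j)) = 0 ∧
      charIdeal (matE0 d) = Jideal d ∧
      swPoly (matE0 d) - (1 + X (⟨0, by omega⟩ : Fin d) ^ 2) ∈ Jideal d) ∧
    (d % 4 = 1 →
      (∑ j, (alphaP (matE1 d) j + betaP (matE1 d) j)) = 0 ∧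
      charIdeal (matE1 d) = Jideal d ∧
      swPoly (matE1 d) - (1 + X (⟨0, by omega⟩ : Fin d) ^ 2) ∈ Jideal d) ∧
    (d % 4 = 3 →
      (∑ j, (alphaP (matF3 d) j + betaP (matF3 d) j)) = 0 ∧
      charIdeal (matF3 d) = Jideal d ∧
      swPoly (matF3 d) - (1 + X (⟨0, by omega⟩ : Fin d) ^ 2) ∈ Jideal d) ∧
    X (⟨0, by omega⟩ : Fin d) ^ 2 ∉ Jideal d := by
  refine ⟨fun h => ⟨sw1Poly_matE0 (by omega) h, charIdeal_matE0,
      Ideal.Quotient.eq.1 (mk_swPoly_matE0 hd h)⟩,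
    fun h => ⟨sw1Poly_matE1 h, charIdeal_matE1, Ideal.Quotient.eq.1 (mk_swPoly_matE1 hd h)⟩,
    fun h => ⟨sw1Poly_matF3 (by omega) h, charIdeal_matF3,
      Ideal.Quotient.eq.1 (mk_swPoly_matF3 hd h)⟩,
    X_sq_not_mem_Jideal _⟩
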